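/- Let G be a loopless graph with n vertices and κ connected components, and let λ be a real number with 0 < λ < 1. Then P_G(λ) ≠ 0 and the sign of P_G(λ) is (−1)^{n−κ}. -/

import Mathlib

/-- The (real-valued) chromatic polynomial of a simple graph `G` (Whitney rank expansion). -/
noncomputable def chromPolyR {V : Type*} [Fintype V] (G : SimpleGraph V) (x : ℝ) : ℝ :=
  ∑ A ∈ (Set.toFinite G.edgeSet).toFinset.powerset,
    (-1 : ℝ) ^ A.card *
      x ^ Nat.card (SimpleGraph.fromEdgeSet (↑A : Set (Sym2 V))).ConnectedComponent

/-!
Deletion–contraction, with contraction encoded by adding edges to an auxiliary graph `H` whose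
components are the contracted vertices. For an edge `uv`, `W(E) = W(E - uv) - W_{H + uv}(E - uv)`.
If `uv` is a bridge of `H ⊔ E`, the contracted term is `W(E - uv) / λ`, so
`W(E) = (1 - 1/λ) W(E - uv)`, and `1 - 1/λ < 0` accounts for the extra component. Otherwise
the contracted term either vanishes (some edge of `E - uv` became a loop) or, by induction,
has the sign opposite to `W(E - uv)`, so the two terms reinforce each other. The sign is
tracked as `(-1)^(κ(H) + κ(H ⊔ E))`, which for `H = ⊥` is `(-1)^(n - κ)`.
-/

theorem neg_one_pow_sub_eq_pow_add {R : Type*} [Monoid R] [HasDistribNeg R] {m n : ℕ}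
    (h : n ≤ m) : (-1 : R) ^ (m - n) = (-1) ^ (m + n) := by
  rw [show m + n = m - n + 2 * n by omega, pow_add, pow_mul, neg_one_sq, one_pow, mul_one]

open Finset

namespace SimpleGraph

variable {V : Type*} {G : SimpleGraph V} {u v a b : V}

theorem reachable_or_of_reachable_sup_edge (h : (G ⊔ edge u v).Reachable a b) :
    G.Reachable a b ∨ (G.Reachable a u ∧ G.Reachable v b) ∨
      (G.Reachable a v ∧ G.Reachable u b) := by
  obtain ⟨p⟩ := h
  induction p with
  | nil => exact .inl .rfl
  | @cons a c b hadj _ ih =>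
    rcases hadj with hG | he
    · have hac := hG.reachable
      rcases ih with h' | ⟨h', h''⟩ | ⟨h', h''⟩
      · exact .inl (hac.trans h')
      · exact .inr (.inl ⟨hac.trans h', h''⟩)
      · exact .inr (.inr ⟨hac.trans h', h''⟩)
    · obtain ⟨⟨rfl, rfl⟩ | ⟨rfl, rfl⟩, -⟩ := (edge_adj ..).mp he
      · rcases ih with h' | ⟨h', h''⟩ | ⟨-, h''⟩
        · exact .inr (.inl ⟨.rfl, h'⟩)
        · exact .inr (.inl ⟨.rfl, h''⟩)
        · exact .inl h''
      · rcases ih with h' | ⟨-, h''⟩ | ⟨h', h''⟩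
        · exact .inr (.inr ⟨.rfl, h'⟩)
        · exact .inl h''
        · exact .inl (h'.symm.trans h'')

theorem card_connectedComponent_sup_edge_of_reachable (h : G.Reachable u v) :
    Nat.card (G ⊔ edge u v).ConnectedComponent = Nat.card G.ConnectedComponent := by
  refine (Nat.card_congr (.ofBijective _
    ⟨fun C D => ?_, ConnectedComponent.surjective_map_ofLE le_sup_left⟩)).symm
  induction C using ConnectedComponent.ind
  induction D using ConnectedComponent.ind
  simp only [ConnectedComponent.map_mk, ConnectedComponent.eq]
  intro hab
  rcases reachable_or_of_reachable_sup_edge hab with h' | ⟨hau, hvb⟩ | ⟨hav, hub⟩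
  · exact h'
  · exact hau.trans (h.trans hvb)
  · exact hav.trans (h.symm.trans hub)

theorem card_connectedComponent_sup_edge_add_one [Finite V] (h : ¬G.Reachable u v) :
    Nat.card (G ⊔ edge u v).ConnectedComponent + 1 = Nat.card G.ConnectedComponent := by
  classical
  let f (C : {C : G.ConnectedComponent // C ≠ G.connectedComponentMk v}) :
      (G ⊔ edge u v).ConnectedComponent :=
    C.1.map (Hom.ofLE le_sup_left)
  have hf : f.Bijective := by
    constructor
    · rintro ⟨C, hC⟩ ⟨D, hD⟩
      induction C using ConnectedComponent.ind
      induction D using ConnectedComponent.ind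
      rw [Ne, ConnectedComponent.eq] at hC hD
      simp only [f, ConnectedComponent.map_mk, ConnectedComponent.eq, Subtype.mk.injEq]
      intro hab
      rcases reachable_or_of_reachable_sup_edge hab with h' | ⟨-, hvb⟩ | ⟨hav, -⟩
      · exact h'
      · exact absurd hvb.symm hD
      · exact absurd hav hC
    · intro C
      induction C using ConnectedComponent.ind with | h w => ?_
      by_cases hw : G.Reachable w v
      · refine ⟨⟨G.connectedComponentMk u, fun huv => h (ConnectedComponent.eq.mp huv)⟩, ?_⟩
        have huv : (G ⊔ edge u v).Adj u v :=
          .inr ((edge_adj ..).mpr ⟨.inl ⟨rfl, rfl⟩, fun e => h (e ▸ .rfl)⟩)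
        simp only [f, ConnectedComponent.map_mk, ConnectedComponent.eq]
        exact huv.reachable.trans (hw.mono le_sup_left).symm
      · exact ⟨⟨G.connectedComponentMk w, fun e => hw (ConnectedComponent.eq.mp e)⟩, rfl⟩
  rw [← Nat.card_congr (Equiv.ofBijective f hf), ← Finite.card_option,
    Nat.card_congr (Equiv.optionSubtypeNe _)]

theorem card_connectedComponent_bot :
    Nat.card (⊥ : SimpleGraph V).ConnectedComponent = Nat.card V :=
  (Nat.card_congr (.ofBijective _
    ⟨fun _ _ h => reachable_bot.mp (ConnectedComponent.eq.mp h), Quot.mk_surjective⟩)).symm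

/-- The Whitney expansion of the chromatic polynomial of the multigraph with edge set `E` in which
the edges of `H` have been contracted; contracting one more edge `uv` replaces `H` by
`H ⊔ edge u v`. -/
noncomputable def whitneySum (H : SimpleGraph V) (E : Finset (Sym2 V)) (x : ℝ) : ℝ :=
  ∑ A ∈ E.powerset,
    (-1) ^ #A * x ^ Nat.card (H ⊔ fromEdgeSet (A : Set (Sym2 V))).ConnectedComponent

variable {H : SimpleGraph V} {E : Finset (Sym2 V)} {x : ℝ}

theorem whitneySum_sup_edge_of_reachable (h : H.Reachable u v) :
    whitneySum (H ⊔ edge u v) E x = whitneySum H E x := by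
  refine sum_congr rfl fun A _ => ?_
  rw [sup_right_comm, card_connectedComponent_sup_edge_of_reachable (h.mono le_sup_left)]

theorem whitneySum_eq_mul_of_not_reachable [Finite V]
    (h : ¬(H ⊔ fromEdgeSet ↑E).Reachable u v) :
    whitneySum H E x = x * whitneySum (H ⊔ edge u v) E x := by
  rw [whitneySum, whitneySum, mul_sum]
  refine sum_congr rfl fun A hA => ?_
  have hA : ¬(H ⊔ fromEdgeSet ↑A).Reachable u v := fun hr =>
    h (hr.mono (sup_le_sup_left (fromEdgeSet_mono (mod_cast mem_powerset.mp hA)) _))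
  rw [sup_right_comm, ← card_connectedComponent_sup_edge_add_one hA, pow_succ]
  ring

variable [DecidableEq V]

theorem sup_fromEdgeSet_insert (H : SimpleGraph V) (A : Finset (Sym2 V)) (u v : V) :
    H ⊔ fromEdgeSet ↑(insert s(u, v) A) = H ⊔ fromEdgeSet ↑A ⊔ edge u v := by
  rw [coe_insert, Set.insert_eq, fromEdgeSet_union, sup_comm (fromEdgeSet _), ← sup_assoc]
  rfl

theorem whitneySum_insert (he : s(u, v) ∉ E) :
    whitneySum H (insert s(u, v) E) x = whitneySum H E x - whitneySum (H ⊔ edge u v) E x := by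
  rw [whitneySum, sum_powerset_insert he, whitneySum, whitneySum, sub_eq_add_neg,
    ← sum_neg_distrib]
  congr 1
  refine sum_congr rfl fun A hA => ?_
  rw [card_insert_of_notMem (fun h => he (mem_powerset.mp hA h)), sup_fromEdgeSet_insert,
    sup_right_comm, pow_succ]
  ring

theorem whitneySum_eq_zero_of_reachable (he : s(u, v) ∈ E) (h : H.Reachable u v) :
    whitneySum H E x = 0 := by
  rw [← insert_erase he, whitneySum_insert (notMem_erase _ _),
    whitneySum_sup_edge_of_reachable h, sub_self]

theorem neg_one_pow_mul_whitneySum_pos [Finite V] (hx0 : 0 < x) (hx1 : x < 1)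
    (hE : ∀ u v, s(u, v) ∈ E → ¬H.Reachable u v) :
    0 < (-1) ^ (Nat.card H.ConnectedComponent +
      Nat.card (H ⊔ fromEdgeSet ↑E).ConnectedComponent) * whitneySum H E x := by
  induction E using Finset.induction_on generalizing H with
  | empty =>
    simp only [whitneySum, powerset_empty, sum_singleton, card_empty, pow_zero, one_mul,
      coe_empty, fromEdgeSet_empty, sup_bot_eq, ← two_mul, pow_mul, neg_one_sq, one_pow]
    positivity
  | @insert e E he ih =>
    induction e using Sym2.ind with | h u v => ?_
    have huv := hE u v (mem_insert_self ..)
    have ih₁ := ih fun p q hpq => hE p q (mem_insert_of_mem hpq)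
    rw [whitneySum_insert he, sup_fromEdgeSet_insert]
    by_cases hb : (H ⊔ fromEdgeSet ↑E).Reachable u v
    · have h₂ : 0 ≤ (-1) ^ (Nat.card (H ⊔ edge u v).ConnectedComponent +
          Nat.card (H ⊔ fromEdgeSet ↑E).ConnectedComponent) * whitneySum (H ⊔ edge u v) E x := by
        rw [← card_connectedComponent_sup_edge_of_reachable hb, ← sup_right_comm]
        by_cases hl : ∀ p q, s(p, q) ∈ E → ¬(H ⊔ edge u v).Reachable p q
        · exact (ih hl).le
        · push Not at hl
          obtain ⟨p, q, hpq, hr⟩ := hl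
          rw [whitneySum_eq_zero_of_reachable hpq hr, mul_zero]
      rw [card_connectedComponent_sup_edge_of_reachable hb]
      rw [← card_connectedComponent_sup_edge_add_one huv, add_right_comm, pow_succ] at ih₁ ⊢
      linarith
    · rw [whitneySum_eq_mul_of_not_reachable hb,
        ← card_connectedComponent_sup_edge_add_one hb, ← add_assoc, pow_succ] at ih₁
      have h₂ : 0 < -(-1) ^ (Nat.card H.ConnectedComponent +
          Nat.card (H ⊔ fromEdgeSet ↑E ⊔ edge u v).ConnectedComponent) *
            whitneySum (H ⊔ edge u v) E x :=
        pos_of_mul_pos_right (a := x) (by linarith) hx0.le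
      calc 0 < (1 - x) * _ := mul_pos (by linarith) h₂
        _ = _ := by rw [whitneySum_eq_mul_of_not_reachable hb]; ring

end SimpleGraph

open SimpleGraph in
theorem chromPolyR_eq_whitneySum {V : Type*} [Fintype V] (G : SimpleGraph V) (x : ℝ) :
    chromPolyR G x = whitneySum ⊥ (Set.toFinite G.edgeSet).toFinset x := by
  simp only [chromPolyR, whitneySum, bot_sup_eq]

/-- Woodall–Jackson, part (ii): for a loopless graph `G` on `n` vertices
with `κ` connected components and any real `0 < λ < 1`, `P_G(λ) ≠ 0` and its sign is
`(−1)^{n−κ}`. -/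
theorem stmt17 {V : Type*} [Fintype V] (G : SimpleGraph V)
    (lam : ℝ) (h0 : 0 < lam) (h1 : lam < 1) :
    chromPolyR G lam ≠ 0 ∧
    0 < (-1 : ℝ) ^ (Fintype.card V - Nat.card G.ConnectedComponent) * chromPolyR G lam := by
  classical
  have hloopless : ∀ u v, s(u, v) ∈ (Set.toFinite G.edgeSet).toFinset →
      ¬(⊥ : SimpleGraph V).Reachable u v := fun u v he huv =>
    G.ne_of_adj (by simpa using he) (SimpleGraph.reachable_bot.mp huv)
  have hpos := SimpleGraph.neg_one_pow_mul_whitneySum_pos h0 h1 hloopless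
  have hκ := SimpleGraph.ConnectedComponent.card_le_card_of_le (bot_le (a := G))
  rw [bot_sup_eq, Set.Finite.coe_toFinset, SimpleGraph.fromEdgeSet_edgeSet,
    ← chromPolyR_eq_whitneySum, SimpleGraph.card_connectedComponent_bot] at hpos
  rw [SimpleGraph.card_connectedComponent_bot] at hκ
  rw [← Nat.card_eq_fintype_card, neg_one_pow_sub_eq_pow_add hκ]
  exact ⟨fun h => by simp [h] at hpos, hpos⟩
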